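/- arXiv:1912.10121 — 4 statements merged into one kernel-verified Lean document; each statement's English description precedes it below -/
import Mathlib

section
/- Let h : ℝ² → ℝ and let η(y) = ℰh(y) be its harmonic extension to the lower half-space ℝ³₋. If the sup-norm of ∇η over ℝ³₋ is bounded by a constant c₀ with 0 < c₀ < 1/2, then the map Θ(y) = (y₁, y₂, y₃ + η(y)) is a bijection from ℝ³₋ = {y ∈ ℝ³ : y₃ < 0} onto the region Ω = {x ∈ ℝ³ : x₃ < h(x₁,x₂)}. -/
/-!
The shear `Θ` moves each vertical line `{y'} × (-∞, 0)` into itself, acting there as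
`t ↦ t + η(y', t)`. Since `|∇η| ≤ c₀ < 1`, this is `t` plus a contraction, hence a strictly
increasing continuous function decreasing at rate at least `1 - c₀` as `t → -∞`; by the
intermediate value theorem it maps `(-∞, 0)` onto `(-∞, η(y', 0)) = (-∞, h(y'))`.
-/

open Set

theorem lipschitzWith_one_update {ι E : Type*} [Fintype ι] [DecidableEq ι] [PseudoMetricSpace E]
    (y : ι → E) (i : ι) : LipschitzWith 1 (Function.update y i) :=
  LipschitzWith.of_dist_le_mul fun s t => by
    rw [NNReal.coe_one, one_mul, dist_pi_le_iff dist_nonneg]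
    intro j
    rcases eq_or_ne j i with rfl | hj
    · simp
    · simp [hj]

section ShiftByContraction

variable {ψ : ℝ → ℝ} {K : NNReal} {a : ℝ}

theorem strictMonoOn_add_of_lipschitzOnWith (hK : K < 1) (hψ : LipschitzOnWith K ψ (Iic a)) :
    StrictMonoOn (fun t => t + ψ t) (Iic a) := by
  intro s hs t ht hst
  have hdist : |ψ t - ψ s| ≤ K * (t - s) := by
    simpa [Real.dist_eq, abs_of_pos (sub_pos.2 hst)] using hψ.dist_le_mul t ht s hs
  have hK' : (K : ℝ) < 1 := by exact_mod_cast hK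
  nlinarith [neg_abs_le (ψ t - ψ s)]

theorem bijOn_add_Iio_of_lipschitzOnWith (hK : K < 1) (hψ : LipschitzOnWith K ψ (Iic a)) :
    BijOn (fun t => t + ψ t) (Iio a) (Iio (a + ψ a)) := by
  have hmono := strictMonoOn_add_of_lipschitzOnWith hK hψ
  refine ⟨fun t ht => hmono (Iio_subset_Iic_self ht) (le_refl a) ht,
    hmono.injOn.mono Iio_subset_Iic_self, fun x hx => ?_⟩
  have hK' : (K : ℝ) < 1 := by exact_mod_cast hK
  -- on `Iic a`, `t + ψ t ≤ a + ψ a - (1 - K) * (a - t)`, so `T` undershoots `x`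
  set T := a - (a + ψ a - x) / (1 - K)
  have hTa : T ≤ a := sub_le_self _ (div_nonneg (sub_nonneg.2 (le_of_lt hx)) (by linarith))
  have hT : T + ψ T ≤ x := by
    have hdist : ψ T - ψ a ≤ K * (a - T) := by
      have := hψ.dist_le_mul T hTa a (le_refl a)
      rw [Real.dist_eq, Real.dist_eq, abs_sub_comm T, abs_of_nonneg (sub_nonneg.2 hTa)] at this
      exact (le_abs_self _).trans this
    have : (1 - K) * (a - T) = a + ψ a - x := by
      simp only [T]; field_simp [(sub_pos.2 hK').ne']; ring
    nlinarith
  obtain ⟨t, ⟨-, hta⟩, rfl⟩ := intermediate_value_Icc hTa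
    ((continuousOn_id.add hψ.continuousOn).mono Icc_subset_Iic_self) ⟨hT, le_of_lt hx⟩
  exact ⟨t, lt_of_le_of_ne hta (by rintro rfl; exact lt_irrefl (t + ψ t) hx), rfl⟩

end ShiftByContraction

section VerticalShear

open Function

variable {ι : Type*} [DecidableEq ι] {η : (ι → ℝ) → ℝ} {i : ι} {a : ℝ}

/-- On the line through `y` parallel to `eᵢ`, the shear `y ↦ y + η(y) eᵢ` acts as
`t ↦ t + η (update y i t)` and preserves the line. -/
theorem bijOn_update_add_of_forall_bijOn
    (hline : ∀ y : ι → ℝ,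
      BijOn (fun t => t + η (update y i t)) (Iio a) (Iio (a + η (update y i a)))) :
    BijOn (fun y => update y i (y i + η y)) {y | y i < a}
      {x | x i < a + η (update x i a)} := by
  refine ⟨fun y hy => ?_, fun y hy z hz hyz => ?_, fun x hx => ?_⟩
  · have := (hline y).mapsTo hy
    simpa [update_idem, update_eq_self] using this
  · have hline_eq : ∀ s, update y i s = update z i s := fun s => by
      simpa [update_idem] using congrArg (update · i s) hyz
    have hi : y i + η y = z i + η z := by simpa using congrFun hyz i
    have : y i = z i := (hline y).injOn hy hz <| by
      simp only [update_eq_self, hline_eq (z i)]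
      simpa [update_eq_self] using hi
    rw [← update_eq_self i y, ← update_eq_self i z, this, hline_eq]
  · obtain ⟨t, ht, hxt⟩ := (hline x).surjOn hx
    exact ⟨update x i t, by simpa using ht, by simp [update_idem, hxt]⟩

end VerticalShear

theorem stmt_0_general (h : ℝ → ℝ → ℝ) (η : (Fin 3 → ℝ) → ℝ) (c₀ : ℝ)
    (hc₀' : c₀ < 1 / 2)
    (hreg : ContDiffOn ℝ 1 η {y : Fin 3 → ℝ | y 2 ≤ 0})
    (hgrad : ∀ y ∈ {y : Fin 3 → ℝ | y 2 ≤ 0},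
      ‖fderivWithin ℝ η {y : Fin 3 → ℝ | y 2 ≤ 0} y‖ ≤ c₀)
    (htrace : ∀ y : Fin 3 → ℝ, y 2 = 0 → η y = h (y 0) (y 1)) :
    Set.BijOn (fun y : Fin 3 → ℝ => Function.update y 2 (y 2 + η y))
      {y : Fin 3 → ℝ | y 2 < 0}
      {x : Fin 3 → ℝ | x 2 < h (x 0) (x 1)} := by
  have hlip : LipschitzOnWith c₀.toNNReal η {y : Fin 3 → ℝ | y 2 ≤ 0} :=
    (convex_halfSpace_le (f := fun y : Fin 3 → ℝ => y 2) ⟨fun _ _ => rfl, fun _ _ => rfl⟩ 0)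
      |>.lipschitzOnWith_of_nnnorm_fderivWithin_le (hreg.differentiableOn one_ne_zero)
        fun y hy => by rw [← norm_toNNReal]; exact Real.toNNReal_le_toNNReal (hgrad y hy)
  have hline : ∀ y : Fin 3 → ℝ, BijOn (fun t => t + η (Function.update y 2 t)) (Iio 0)
      (Iio (0 + η (Function.update y 2 0))) := fun y =>
    bijOn_add_Iio_of_lipschitzOnWith (Real.toNNReal_lt_one.2 (by linarith)) <| by
      have := hlip.comp (lipschitzWith_one_update y 2).lipschitzOnWith
        fun t (ht : t ≤ 0) => by simpa using ht
      rwa [mul_one] at this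
  convert bijOn_update_add_of_forall_bijOn hline using 1
  ext x
  rw [mem_ofPred_eq, mem_ofPred_eq, zero_add, htrace _ (by simp)]
  simp

/-- If the harmonic extension `η` of `h` to the lower half-space has sup-norm of its
gradient bounded by `c₀ < 1/2`, then the Hanzawa map
`Θ(y) = (y₁, y₂, y₃ + η(y))` is a bijection from `ℝ³₋` onto `Ω = {x₃ < h(x₁,x₂)}`. -/
theorem stmt_0 (h : ℝ → ℝ → ℝ) (η : (Fin 3 → ℝ) → ℝ) (c₀ : ℝ)
    (hc₀ : 0 < c₀) (hc₀' : c₀ < 1 / 2)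
    (hreg : ContDiffOn ℝ 1 η {y : Fin 3 → ℝ | y 2 ≤ 0})
    (hgrad : ∀ y ∈ {y : Fin 3 → ℝ | y 2 ≤ 0},
      ‖fderivWithin ℝ η {y : Fin 3 → ℝ | y 2 ≤ 0} y‖ ≤ c₀)
    (htrace : ∀ y : Fin 3 → ℝ, y 2 = 0 → η y = h (y 0) (y 1)) :
    Set.BijOn (fun y : Fin 3 → ℝ => Function.update y 2 (y 2 + η y))
      {y : Fin 3 → ℝ | y 2 < 0}
      {x : Fin 3 → ℝ | x 2 < h (x 0) (x 1)} :=
  stmt_0_general h η c₀ hc₀' hreg hgrad htrace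
end

section
/- Let B(τ) ∈ 𝓛(L^r(ℝ²)³, W¹_r(ℝ³₋)³) (τ > 0) satisfy ‖∇ˡ B(τ)f‖_{L^r(ℝ³₋)} ≤ C τ^{−(1+l)/2 + 1/(2r)} e^{−τ} ‖f‖_{L^r(ℝ²)} for l = 0,1. Suppose 2 < p < ∞, 3 < q < 4, 2/p + 3/q < 1, and (1−2/p)^{-1} < r ≤ q, and let h ∈ L^p((0,∞), W¹_r(ℝ³₋)³) with (t+2)^{c} h ∈ L^p in the same norm for some c ≥ 0. Then the function u(t) = ∫₀ᵗ B(t−s) h(·,0,s) ds satisfies ‖u(t)‖_{W¹_r(ℝ³₋)} ≤ C' (t+2)^{−c} ‖(t+2)^c h‖_{L^p((0,∞), W¹_r(ℝ³₋))} for all t > 0. -/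
/-!
Since `t + 2 ≤ (s + 2) (t - s + 2)`, the weight `(t + 2)^c` is moved onto `h s` at the cost of a
factor `(t - s + 2)^c`, which half of the decay `e^{-(t-s)}` absorbs. Hölder's inequality in `s`
then bounds `‖u t‖` by `(t + 2)^{-c}` times the `L^{p'}(0, ∞)` norm of
`(τ^a + τ^b) e^{-τ/2}` times `‖(s + 2)^c h‖_{L^p}`; the former is finite because `2 r < p` makes
`τ^{a p'}`, `a = -1 + 1/(2r)`, integrable at `0`.
-/

open MeasureTheory
open scoped ENNReal

open Real Set

/-- `g` need not be measurable: `‖f‖ / k` is a measurable minorant of `|g|` to which the usual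
Hölder inequality applies. -/
theorem lintegral_enorm_le_eLpNorm_mul_eLpNorm_of_le_mul {α E : Type*} [MeasurableSpace α]
    {μ : Measure α} [NormedAddCommGroup E] {p q : ℝ≥0∞} [p.HolderConjugate q] {f : α → E} {k g : α → ℝ} (hf : AEStronglyMeasurable f μ) (hk : AEStronglyMeasurable k μ)
    (hfkg : ∀ᵐ x ∂μ, ‖f x‖ ≤ k x * g x) :
    ∫⁻ x, ‖f x‖ₑ ∂μ ≤ eLpNorm k p μ * eLpNorm g q μ := by
  set g' : α → ℝ := fun x => ‖f x‖ / k x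
  have hg' : AEStronglyMeasurable g' μ :=
    (hf.norm.aemeasurable.div hk.aemeasurable).aestronglyMeasurable
  have hfactor : ∀ᵐ x ∂μ, ‖f x‖ = ‖k x * g' x‖ ∧ ‖g' x‖ ≤ ‖g x‖ := by
    filter_upwards [hfkg] with x hx
    have hx' : ‖f x‖ ≤ ‖k x‖ * ‖g x‖ :=
      hx.trans ((le_abs_self _).trans (abs_mul (k x) (g x)).le)
    rcases eq_or_ne (k x) 0 with hk0 | hk0
    · simp only [g', hk0, div_zero, mul_zero, norm_zero, zero_mul] at hx' ⊢
      exact ⟨le_antisymm hx' (norm_nonneg _), norm_nonneg _⟩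
    · refine ⟨by simp [g', mul_div_cancel₀ _ hk0], ?_⟩
      rw [norm_div, norm_norm, div_le_iff₀ (norm_pos_iff.2 hk0), mul_comm]
      exact hx'
  calc ∫⁻ x, ‖f x‖ₑ ∂μ = eLpNorm (fun x => k x * g' x) 1 μ := by
        rw [← eLpNorm_one_eq_lintegral_enorm]
        exact eLpNorm_congr_norm_ae (hfactor.mono fun x hx => hx.1)
    _ ≤ (1 : NNReal) * eLpNorm k p μ * eLpNorm g' q μ :=
        eLpNorm_le_eLpNorm_mul_eLpNorm'_of_norm hk hg' (· * ·) 1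
          (Filter.Eventually.of_forall fun x => by simp [norm_mul])
    _ ≤ eLpNorm k p μ * eLpNorm g q μ := by
        rw [ENNReal.coe_one, one_mul]
        gcongr
        exact eLpNorm_mono_ae (hfactor.mono fun x hx => hx.2)

theorem enorm_setIntegral_Ioo_le {E : Type*} [NormedAddCommGroup E] [NormedSpace ℝ E]
    {p q : ℝ≥0∞} [p.HolderConjugate q] {F : ℝ → E} {k g : ℝ → ℝ} {t : ℝ}
    (hF : AEStronglyMeasurable F (volume.restrict (Ioo 0 t))) (hk : Measurable k)
    (hFkg : ∀ s ∈ Ioo 0 t, ‖F s‖ ≤ k (t - s) * g s) :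
    ‖∫ s in Ioo 0 t, F s‖ₑ ≤
      eLpNorm k p (volume.restrict (Ioi 0)) * eLpNorm g q (volume.restrict (Ioi 0)) := by
  have hreflect : MeasurePreserving (fun s => t - s)
      (volume.restrict (Ioo 0 t)) (volume.restrict (Ioo 0 t)) := by
    have := (Measure.measurePreserving_sub_left volume t).restrict_preimage
      (measurableSet_Ioo (a := (0 : ℝ)) (b := t))
    have hpre : (fun s => t - s) ⁻¹' Ioo 0 t = Ioo 0 t := by
      ext s; simp only [mem_preimage, mem_Ioo]; constructor <;> rintro ⟨h1, h2⟩ <;>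
        constructor <;> linarith
    rwa [hpre] at this
  have hrestrict : volume.restrict (Ioo (0 : ℝ) t) ≤ volume.restrict (Ioi 0) :=
    Measure.restrict_mono Ioo_subset_Ioi_self le_rfl
  calc ‖∫ s in Ioo 0 t, F s‖ₑ ≤ ∫⁻ s in Ioo 0 t, ‖F s‖ₑ := enorm_integral_le_lintegral_enorm _
    _ ≤ eLpNorm (k ∘ fun s => t - s) p (volume.restrict (Ioo 0 t)) *
          eLpNorm g q (volume.restrict (Ioo 0 t)) :=
        lintegral_enorm_le_eLpNorm_mul_eLpNorm_of_le_mul hF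
          (hk.comp (measurable_const.sub measurable_id)).aestronglyMeasurable
          (ae_restrict_of_forall_mem measurableSet_Ioo hFkg)
    _ ≤ _ := by
        rw [eLpNorm_comp_measurePreserving hk.aestronglyMeasurable hreflect]
        exact mul_le_mul' (eLpNorm_mono_measure _ hrestrict) (eLpNorm_mono_measure _ hrestrict)

theorem norm_setIntegral_Ioo_le {E : Type*} [NormedAddCommGroup E] [NormedSpace ℝ E]
    {p q : ℝ≥0∞} [p.HolderConjugate q] {F : ℝ → E} {k g : ℝ → ℝ} {t A M : ℝ}
    (hF : AEStronglyMeasurable F (volume.restrict (Ioo 0 t))) (hA : 0 ≤ A) (hM : 0 ≤ M)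
    (hk : Measurable k) (hkp : MemLp k p (volume.restrict (Ioi 0)))
    (hgq : eLpNorm g q (volume.restrict (Ioi 0)) ≤ ENNReal.ofReal M)
    (hFkg : ∀ s ∈ Ioo 0 t, ‖F s‖ ≤ A * k (t - s) * g s) :
    ‖∫ s in Ioo 0 t, F s‖ ≤ A * (eLpNorm k p (volume.restrict (Ioi 0))).toReal * M := by
  have hAg : eLpNorm (fun s => A * g s) q (volume.restrict (Ioi 0)) ≤
      ENNReal.ofReal A * ENNReal.ofReal M := by
    rw [← Real.enorm_of_nonneg hA]
    calc _ = ‖A‖ₑ * eLpNorm g q (volume.restrict (Ioi 0)) := eLpNorm_const_smul A g _ _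
      _ ≤ _ := by gcongr
  have hbound := enorm_setIntegral_Ioo_le (p := p) (q := q) hF hk
    (fun s hs => (hFkg s hs).trans_eq (by ring) : ∀ s ∈ Ioo 0 t, ‖F s‖ ≤ k (t - s) * (A * g s))
  rw [← ENNReal.ofReal_le_ofReal_iff (by positivity), ofReal_norm,
    ENNReal.ofReal_mul (by positivity), ENNReal.ofReal_mul hA,
    ENNReal.ofReal_toReal hkp.eLpNorm_ne_top]
  calc _ ≤ _ := hbound
    _ ≤ _ := by
      rw [mul_comm (ENNReal.ofReal A), mul_assoc]
      gcongr

noncomputable def halfDecayKernel (a b τ : ℝ) : ℝ := (τ ^ a + τ ^ b) * exp (-(1 / 2) * τ)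

theorem memLp_rpow_mul_exp_neg_mul {s β m : ℝ} (hm : 0 < m) (hs : -1 < s * m) (hβ : 0 < β) :
    MemLp (fun x : ℝ => x ^ s * exp (-β * x)) (ENNReal.ofReal m) (volume.restrict (Ioi 0)) := by
  have hmeas : AEStronglyMeasurable (fun x : ℝ => x ^ s * exp (-β * x))
      (volume.restrict (Ioi 0)) := by fun_prop
  rw [← integrable_norm_rpow_iff hmeas (by simpa using hm) ENNReal.ofReal_ne_top,
    ENNReal.toReal_ofReal hm.le]
  refine (integrableOn_rpow_mul_exp_neg_mul_rpow hs one_pos (mul_pos hβ hm)).congr_fun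
    (fun x hx => ?_) measurableSet_Ioi
  have hx0 : 0 ≤ x := le_of_lt hx
  simp only [rpow_one]
  rw [norm_of_nonneg (by positivity), mul_rpow (by positivity) (exp_pos _).le, ← rpow_mul hx0,
    ← exp_mul]
  ring_nf

theorem memLp_halfDecayKernel {a b m : ℝ} (hm : 0 < m) (ha : -1 < a * m) (hb : -1 < b * m) :
    MemLp (halfDecayKernel a b) (ENNReal.ofReal m) (volume.restrict (Ioi 0)) := by
  convert (memLp_rpow_mul_exp_neg_mul hm ha one_half_pos).add
    (memLp_rpow_mul_exp_neg_mul hm hb one_half_pos) using 1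
  funext τ
  simp only [halfDecayKernel, Pi.add_apply]
  ring

theorem add_two_rpow_le_mul_exp {c x : ℝ} (hc : 0 ≤ c) (hx : 0 ≤ x) :
    (x + 2) ^ c ≤ (2 * (c + 1)) ^ c * exp (x / 2) := by
  have hc1 : 0 < 2 * (c + 1) := by linarith
  have hlin : x + 2 ≤ 2 * (c + 1) * exp (x / (2 * (c + 1))) :=
    calc x + 2 ≤ 2 * (c + 1) * (x / (2 * (c + 1)) + 1) := by
          rw [mul_add, mul_div_cancel₀ _ hc1.ne']; linarith
      _ ≤ _ := by gcongr; exact add_one_le_exp _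
  calc (x + 2) ^ c ≤ (2 * (c + 1) * exp (x / (2 * (c + 1)))) ^ c :=
        rpow_le_rpow (by linarith) hlin hc
    _ = (2 * (c + 1)) ^ c * exp (x / (2 * (c + 1)) * c) := by
        rw [mul_rpow hc1.le (exp_pos _).le, exp_mul]
    _ ≤ (2 * (c + 1)) ^ c * exp (x / 2) := by
        gcongr
        rw [div_mul_eq_mul_div, div_le_div_iff₀ hc1 two_pos]
        nlinarith

theorem add_add_two_rpow_le_mul {c x y : ℝ} (hc : 0 ≤ c) (hx : 0 ≤ x) (hy : 0 ≤ y) :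
    (x + y + 2) ^ c ≤ (x + 2) ^ c * (y + 2) ^ c := by
  rw [← mul_rpow (by linarith) (by linarith)]
  exact rpow_le_rpow (by linarith) (by nlinarith) hc

theorem exp_neg_sub_le {c s t : ℝ} (hc : 0 ≤ c) (hs : 0 ≤ s) (hst : s ≤ t) :
    exp (-(t - s)) ≤
      (2 * (c + 1)) ^ c * exp (-(1 / 2) * (t - s)) * ((t + 2) ^ (-c) * (s + 2) ^ c) := by
  have hτ : 0 ≤ t - s := sub_nonneg.2 hst
  have ht2 : 0 < (t + 2) ^ c := rpow_pos_of_pos (by linarith) c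
  have hhalf : exp (-(t - s)) * exp ((t - s) / 2) = exp (-(1 / 2) * (t - s)) := by
    rw [← exp_add]; ring_nf
  have hweighted : exp (-(t - s)) * (t + 2) ^ c ≤
      (2 * (c + 1)) ^ c * exp (-(1 / 2) * (t - s)) * (s + 2) ^ c :=
    calc exp (-(t - s)) * (t + 2) ^ c
        ≤ exp (-(t - s)) * ((s + 2) ^ c * ((2 * (c + 1)) ^ c * exp ((t - s) / 2))) := by
          gcongr
          calc (t + 2) ^ c = (s + (t - s) + 2) ^ c := by ring_nf
            _ ≤ (s + 2) ^ c * (t - s + 2) ^ c := add_add_two_rpow_le_mul hc hs hτ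
            _ ≤ _ := by gcongr; exact add_two_rpow_le_mul_exp hc hτ
      _ = (2 * (c + 1)) ^ c * exp (-(1 / 2) * (t - s)) * (s + 2) ^ c := by
          rw [← hhalf]; ring
  calc exp (-(t - s)) = exp (-(t - s)) * (t + 2) ^ c * ((t + 2) ^ c)⁻¹ := by field_simp
    _ ≤ (2 * (c + 1)) ^ c * exp (-(1 / 2) * (t - s)) * (s + 2) ^ c * ((t + 2) ^ c)⁻¹ := by
        gcongr
    _ = _ := by rw [rpow_neg (by linarith)]; ring

theorem neg_one_lt_mul_conjExponent {p r : ℝ} (hp : 1 < p) (hr : 0 < r) (hrp : 2 * r < p) :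
    -1 < (-1 + 1 / (2 * r)) * p.conjExponent := by
  rw [Real.conjExponent, mul_div_assoc', lt_div_iff₀ (by linarith),
    show (-1 + 1 / (2 * r)) * p = -p + p / (2 * r) by field_simp]
  have : 1 < p / (2 * r) := (one_lt_div (by linarith)).2 hrp
  linarith

theorem two_mul_lt_of_two_div_add_three_div_lt_one {p q r : ℝ} (hp : 0 < p) (hr : 0 < r)
    (hq4 : q < 4) (hpq : 2 / p + 3 / q < 1) (hrq : r ≤ q) : 2 * r < p := by
  have h3q : 3 / 4 < 3 / q := div_lt_div_of_pos_left (by norm_num) (hr.trans_le hrq) hq4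
  have h8p : 8 < p := by
    have : 2 / p < 2 / 8 := by linarith
    exact (div_lt_div_iff_of_pos_left two_pos hp (by norm_num)).1 this
  linarith

theorem norm_apply_trace_le {Y Z : Type*} [NormedAddCommGroup Y] [NormedSpace ℝ Y]
    [NormedAddCommGroup Z] [NormedSpace ℝ Z] {γ : Z →L[ℝ] Y} (hγ : ‖γ‖ ≤ 1) {T : Y →L[ℝ] Z}
    {C a b c s t : ℝ} (hc : 0 ≤ c) (hs : 0 ≤ s) (hst : s ≤ t)
    (hT : ‖T‖ ≤ C * ((t - s) ^ a + (t - s) ^ b) * exp (-(t - s))) (z : Z) :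
    ‖T (γ z)‖ ≤ (t + 2) ^ (-c) * (|C| * (2 * (c + 1)) ^ c) * halfDecayKernel a b (t - s) *
      ((s + 2) ^ c * ‖z‖) := by
  have hτ : 0 ≤ t - s := sub_nonneg.2 hst
  calc ‖T (γ z)‖ ≤ ‖T‖ * ‖z‖ := T.le_opNorm_of_le (by simpa using γ.le_of_opNorm_le hγ z)
    _ ≤ |C| * ((t - s) ^ a + (t - s) ^ b) * exp (-(t - s)) * ‖z‖ := by
        gcongr
        exact hT.trans (by gcongr; exact le_abs_self C)
    _ ≤ |C| * ((t - s) ^ a + (t - s) ^ b) * ((2 * (c + 1)) ^ c * exp (-(1 / 2) * (t - s)) *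
          ((t + 2) ^ (-c) * (s + 2) ^ c)) * ‖z‖ := by
        gcongr
        exact exp_neg_sub_le hc hs hst
    _ = _ := by simp only [halfDecayKernel]; ring

/-- `Z` stands for `W¹_r(ℝ³₋)³`, `Y` for `L^r(ℝ²)³`, `γ` for the (normalized) trace, and the
bound on `‖B τ‖` combines the kernel bounds for `l = 0, 1`. -/
theorem stmt_5_general (p q r c C : ℝ)
    (hp : 2 < p) (hq4 : q < 4) (hpq : 2 / p + 3 / q < 1)
    (hr1 : (1 - 2 / p)⁻¹ < r) (hrq : r ≤ q) (hc : 0 ≤ c) :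
    ∃ C' : ℝ, 0 < C' ∧
      ∀ (Y Z : Type) [NormedAddCommGroup Y] [NormedSpace ℝ Y]
        [NormedAddCommGroup Z] [NormedSpace ℝ Z],
        ∀ (γ : Z →L[ℝ] Y), ‖γ‖ ≤ 1 →
        ∀ (B : ℝ → Y →L[ℝ] Z),
        (∀ τ : ℝ, 0 < τ →
          ‖B τ‖ ≤ C * (τ ^ (-(1 : ℝ) + 1 / (2 * r)) + τ ^ (-(1 : ℝ) / 2 + 1 / (2 * r))) *
            Real.exp (-τ)) →
        ∀ (h : ℝ → Z) (M : ℝ), 0 ≤ M →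
        (∀ t : ℝ, AEStronglyMeasurable (fun s => (B (t - s)) (γ (h s)))
          (volume.restrict (Set.Ioo 0 t))) →
        eLpNorm (fun s : ℝ => (s + 2) ^ c * ‖h s‖) (ENNReal.ofReal p)
            (volume.restrict (Set.Ioi (0 : ℝ))) ≤ ENNReal.ofReal M →
        ∀ t : ℝ, 0 < t →
          ‖∫ s in Set.Ioo (0 : ℝ) t, (B (t - s)) (γ (h s))‖ ≤ C' * (t + 2) ^ (-c) * M := by
  have hr : 0 < r := (inv_pos.2 (sub_pos.2 ((div_lt_one (by linarith)).2 hp))).trans hr1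
  have hconj : p.conjExponent.HolderConjugate p :=
    (Real.HolderConjugate.conjExponent (by linarith)).symm
  have := hconj.ennrealOfReal
  set a : ℝ := -(1 : ℝ) + 1 / (2 * r)
  set b : ℝ := -(1 : ℝ) / 2 + 1 / (2 * r)
  have ha : -1 < a * p.conjExponent := neg_one_lt_mul_conjExponent (by linarith) hr
    (two_mul_lt_of_two_div_add_three_div_lt_one (by linarith) hr hq4 hpq hrq)
  have hb : -1 < b * p.conjExponent :=
    ha.trans_le (mul_le_mul_of_nonneg_right (by simp only [a, b]; linarith) hconj.nonneg)
  set A := |C| * (2 * (c + 1)) ^ c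
  set K := (eLpNorm (halfDecayKernel a b) (ENNReal.ofReal p.conjExponent)
    (volume.restrict (Ioi 0))).toReal
  refine ⟨A * K + 1, by positivity, ?_⟩
  intro Y Z _ _ _ _ γ hγ B hB h M hM hmeas hLp t ht
  have hdecay : 0 ≤ (t + 2) ^ (-c) := rpow_nonneg (by linarith) _
  calc _ ≤ (t + 2) ^ (-c) * A * K * M :=
        norm_setIntegral_Ioo_le (hmeas t) (by positivity) hM
          (by unfold halfDecayKernel; fun_prop) (memLp_halfDecayKernel hconj.pos ha hb) hLp
          fun s hs => norm_apply_trace_le hγ hc hs.1.le hs.2.le (hB _ (sub_pos.2 hs.2)) (h s)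
    _ ≤ (A * K + 1) * (t + 2) ^ (-c) * M := by nlinarith [mul_nonneg hdecay hM]

/-- Decay estimate for `u(t) = ∫₀ᵗ B(t-s) h(·,0,s) ds`.  Here `Z` plays the role of
`W¹_r(ℝ³₋)³`, `Y` that of the boundary space `L^r(ℝ²)³`, `γ : Z → Y` is the (normalized)
trace operator, and the family `B(τ)` satisfies the kernel bounds
`‖∇ˡ B(τ)f‖_{L^r} ≤ C τ^{-(1+l)/2 + 1/(2r)} e^{-τ} ‖f‖` for `l = 0, 1` (combined into an
equivalent bound for the `W¹_r` norm).  If `(t+2)^c h ∈ L^p((0,∞), W¹_r)` with norm at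
most `M`, then `‖u(t)‖_{W¹_r} ≤ C' (t+2)^{-c} M` for all `t > 0`. -/
theorem stmt_5 (p q r c C : ℝ)
    (hp : 2 < p) (hq3 : 3 < q) (hq4 : q < 4) (hpq : 2 / p + 3 / q < 1)
    (hr1 : (1 - 2 / p)⁻¹ < r) (hrq : r ≤ q) (hc : 0 ≤ c) (hC : 0 < C) :
    ∃ C' : ℝ, 0 < C' ∧
      ∀ (Y Z : Type) [NormedAddCommGroup Y] [NormedSpace ℝ Y]
        [NormedAddCommGroup Z] [NormedSpace ℝ Z],
        ∀ (γ : Z →L[ℝ] Y), ‖γ‖ ≤ 1 →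
        ∀ (B : ℝ → Y →L[ℝ] Z),
        (∀ τ : ℝ, 0 < τ →
          ‖B τ‖ ≤ C * (τ ^ (-(1 : ℝ) + 1 / (2 * r)) + τ ^ (-(1 : ℝ) / 2 + 1 / (2 * r))) *
            Real.exp (-τ)) →
        ∀ (h : ℝ → Z) (M : ℝ), 0 ≤ M →
        (∀ t : ℝ, AEStronglyMeasurable (fun s => (B (t - s)) (γ (h s)))
          (volume.restrict (Set.Ioo 0 t))) →
        eLpNorm (fun s : ℝ => (s + 2) ^ c * ‖h s‖) (ENNReal.ofReal p)
            (volume.restrict (Set.Ioi (0 : ℝ))) ≤ ENNReal.ofReal M →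
        ∀ t : ℝ, 0 < t →
          ‖∫ s in Set.Ioo (0 : ℝ) t, (B (t - s)) (γ (h s))‖ ≤ C' * (t + 2) ^ (-c) * M :=
  stmt_5_general p q r c C hp hq4 hpq hr1 hrq hc
end

section
/- Let μ > 0, 0 < ε < π/2, and for ξ' ∈ ℝ² \ {0}, λ ∈ Σ_ε = {λ ∈ ℂ \ {0} : |arg λ| < π − ε}, set A = |ξ'| and B = √(λ/μ + A²) with Re B ≥ 0. Then there exists a constant c = c(ε, μ) > 0 such that Re B ≥ c (|λ|^{1/2} + A) for all such λ and ξ'. -/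
/-!
Writing `w = λ/μ + |ξ'|²` for `B²`, one has `2 (Re B)² = |w| + Re w`. The sector condition gives
`Re λ ≥ -cos ε · |λ|`, and adding the positive real `|ξ'|²` can only help: `|w| + Re w` is at least
`(1 - cos ε)/2 · (|λ|/μ + |ξ'|²)`, which dominates `(|λ|^{1/2} + |ξ'|)²` up to a factor depending
on `μ` and `ε` only.
-/

open Complex

lemma two_mul_re_sq_eq_norm_add_re_of_sq_eq {B w : ℂ} (hB : B ^ 2 = w) :
    2 * B.re ^ 2 = ‖w‖ + w.re := by
  rw [← hB, norm_pow, Complex.sq_norm, normSq_apply, sq B, mul_re]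
  ring

lemma neg_cos_mul_norm_le_re_of_abs_arg_le {z : ℂ} {ε : ℝ} (hε : 0 ≤ ε)
    (harg : |arg z| ≤ Real.pi - ε) : -(Real.cos ε * ‖z‖) ≤ z.re := by
  have hcos : -Real.cos ε ≤ Real.cos (arg z) := by
    rw [← Real.cos_abs (arg z), ← Real.cos_pi_sub]
    exact Real.cos_le_cos_of_nonneg_of_le_pi (abs_nonneg _) (by linarith) harg
  rw [← norm_mul_cos_arg z]
  nlinarith [norm_nonneg z]

lemma half_one_sub_mul_le_norm_add_re_add_ofReal {z : ℂ} {c t : ℝ} (hc₀ : -1 ≤ c) (hc₁ : c ≤ 1)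
    (ht : 0 ≤ t) (hz : -(c * ‖z‖) ≤ z.re) : (1 - c) / 2 * (‖z‖ + t) ≤ ‖z + t‖ + (z + t).re := by
  have hre : (z + t).re = z.re + t := by simp
  rcases le_total t ‖z‖ with h | h
  · have hnorm : ‖z‖ - t ≤ ‖z + t‖ := by
      simpa [Real.norm_of_nonneg ht] using norm_sub_norm_le z (-(t : ℂ))
    nlinarith [mul_nonneg (sub_nonneg.2 hc₁) (sub_nonneg.2 h)]
  · have hnorm : (z + t).re ≤ ‖z + t‖ := re_le_norm _
    nlinarith [mul_nonneg (by linarith : 0 ≤ c + 3) (sub_nonneg.2 h),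
      mul_nonneg (sub_nonneg.2 hc₁) (norm_nonneg z)]

lemma sq_sqrt_add_le_two_mul_max_mul {μ r a : ℝ} (hμ : 0 < μ) (hr : 0 ≤ r) :
    (√r + a) ^ 2 ≤ 2 * max μ 1 * (r / μ + a ^ 2) := by
  have hsq : (√r + a) ^ 2 ≤ 2 * (r + a ^ 2) := by
    nlinarith [Real.sq_sqrt hr, sq_nonneg (√r - a)]
  have hr' : r ≤ max μ 1 * (r / μ) := by
    rw [mul_div_assoc', le_div_iff₀ hμ]
    exact mul_comm r μ ▸ mul_le_mul_of_nonneg_right (le_max_left μ 1) hr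
  nlinarith [le_max_right μ 1, sq_nonneg a]

/-- Sector lower bound: for `λ` in the sector `Σ_ε = {|arg λ| < π - ε, λ ≠ 0}` and
`A = |ξ'| > 0`, the root `B = √(λ/μ + A²)` with `Re B ≥ 0` satisfies
`Re B ≥ c (|λ|^{1/2} + A)` for a constant `c = c(ε, μ) > 0`. -/
theorem stmt_12 (μ ε : ℝ) (hμ : 0 < μ) (hε0 : 0 < ε) (hε : ε < Real.pi / 2) :
    ∃ c : ℝ, 0 < c ∧
      ∀ ξ' : EuclideanSpace ℝ (Fin 2), ξ' ≠ 0 →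
        ∀ lam : ℂ, lam ≠ 0 → |Complex.arg lam| < Real.pi - ε →
          ∀ B : ℂ, B ^ 2 = lam / (μ : ℂ) + (‖ξ'‖ : ℂ) ^ 2 → 0 ≤ B.re →
            c * (Real.sqrt ‖lam‖ + ‖ξ'‖) ≤ B.re := by
  have hcos : 0 < 1 - Real.cos ε := by
    have hlt := Real.cos_lt_cos_of_nonneg_of_le_pi le_rfl (by linarith [Real.pi_pos]) hε0
    rw [Real.cos_zero] at hlt
    linarith
  have hκ : 0 < (1 - Real.cos ε) / (8 * max μ 1) := by positivity
  refine ⟨√((1 - Real.cos ε) / (8 * max μ 1)), Real.sqrt_pos.2 hκ, ?_⟩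
  intro ξ' _ lam _ harg B hB hBre
  have hz : -(Real.cos ε * ‖lam / μ‖) ≤ (lam / μ).re := by
    refine neg_cos_mul_norm_le_re_of_abs_arg_le hε0.le ?_
    rw [div_eq_inv_mul, ← ofReal_inv, arg_real_mul _ (inv_pos.2 hμ)]
    exact harg.le
  have hnorm : ‖lam / μ‖ = ‖lam‖ / μ := by
    rw [norm_div, norm_real, Real.norm_of_nonneg hμ.le]
  have hlower := half_one_sub_mul_le_norm_add_re_add_ofReal
    (Real.neg_one_le_cos ε) (Real.cos_le_one ε)
    (sq_nonneg ‖ξ'‖) hz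
  rw [← two_mul_re_sq_eq_norm_add_re_of_sq_eq (by rw [hB]; push_cast; rfl), hnorm] at hlower
  have hupper := sq_sqrt_add_le_two_mul_max_mul (a := ‖ξ'‖) hμ (norm_nonneg lam)
  rw [← pow_le_pow_iff_left₀ (by positivity) hBre two_ne_zero, mul_pow,
    Real.sq_sqrt hκ.le]
  calc (1 - Real.cos ε) / (8 * max μ 1) * (√‖lam‖ + ‖ξ'‖) ^ 2
      ≤ (1 - Real.cos ε) / (8 * max μ 1) * (2 * max μ 1 * (‖lam‖ / μ + ‖ξ'‖ ^ 2)) :=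
        mul_le_mul_of_nonneg_left hupper hκ.le
    _ = (1 - Real.cos ε) / 2 * (‖lam‖ / μ + ‖ξ'‖ ^ 2) / 2 := by
        field_simp
        ring
    _ ≤ B.re ^ 2 := by linarith
end

section
/- Let f : ℝ → ℂ be C² on ℝ \ {0} and suppose there are constants M ≥ 0 and σ ∈ (0,1) such that |f^{(k)}(τ)| ≤ M |τ|^{σ−1−k} for k = 0, 1 and all τ ≠ 0, and f ∈ L¹(ℝ). Then the inverse Fourier transform g(t) = (1/2π)∫_ℝ e^{itτ} f(τ) dτ satisfies |g(t)| ≤ C M |t|^{−σ} for all t ≠ 0, with C depending only on σ. -/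
/-!
With `h = π / t` the phase `τ ↦ exp (i t τ)` is antiperiodic of antiperiod `h`, so twice the
integral equals `∫ exp (i t τ) (f τ - f (τ + h)) dτ`. For `|τ| ≤ 3|h|` the difference is bounded
by the size bound on `f` at `τ` and `τ + h`; for `|τ| > 3|h|` the mean value theorem bounds it by
`|h|` times the derivative bound at distance at least `2|τ|/3` from the origin. Both pieces
integrate to a multiple of `M |h| ^ σ = M π ^ σ |t| ^ (-σ)`.
-/

open MeasureTheory Set Real

lemma integrable_comp_abs_of_integrableOn_Ioi {Φ : ℝ → ℝ} (h : IntegrableOn Φ (Ioi 0)) :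
    Integrable fun x => Φ |x| := by
  have hpos : IntegrableOn (fun x => Φ |x|) (Ioi 0) :=
    h.congr_fun (fun x hx => by rw [abs_of_pos (mem_Ioi.mp hx)]) measurableSet_Ioi
  have hneg : IntegrableOn (fun x => Φ |x|) (Iic 0) := by
    have hm : MeasurableEmbedding fun x : ℝ => -x := (Homeomorph.neg ℝ).measurableEmbedding
    rw [← Measure.map_neg_eq_self (volume : Measure ℝ), hm.integrableOn_map_iff]
    simp_rw [Function.comp_def, abs_neg, neg_preimage, neg_Iic, neg_zero]
    exact (integrableOn_Ici_iff_integrableOn_Ioi (by simp)).2 hpos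
  rw [← integrableOn_univ, ← Iic_union_Ioi (a := (0 : ℝ))]
  exact hneg.union hpos

lemma indicator_abs_preimage (S : Set ℝ) (g : ℝ → ℝ) :
    (abs ⁻¹' S).indicator (fun x => g |x|) = fun x => S.indicator g |x| :=
  funext fun _ => indicator_comp_right (g := g) abs

section absPreimage

variable {g : ℝ → ℝ} {S : Set ℝ}

lemma integrableOn_comp_abs_preimage (hS : MeasurableSet S) (hg : IntegrableOn g (S ∩ Ioi 0)) :
    IntegrableOn (fun x => g |x|) (abs ⁻¹' S) := by
  rw [← integrable_indicator_iff (measurable_abs hS), indicator_abs_preimage]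
  refine integrable_comp_abs_of_integrableOn_Ioi ?_
  rwa [IntegrableOn, integrable_indicator_iff hS, IntegrableOn, Measure.restrict_restrict hS]

lemma setIntegral_comp_abs_preimage (hS : MeasurableSet S) :
    ∫ x in abs ⁻¹' S, g |x| = 2 * ∫ x in S ∩ Ioi 0, g x := by
  rw [← integral_indicator (measurable_abs hS), indicator_abs_preimage, integral_comp_abs,
    integral_indicator hS, Measure.restrict_restrict hS]

end absPreimage

lemma integrable_indicator_abs_le_rpow {s : ℝ} (hs : -1 < s) (R : ℝ) :
    Integrable ({x : ℝ | |x| ≤ R}.indicator fun x => |x| ^ s) := by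
  rw [integrable_indicator_iff (measurableSet_le measurable_abs measurable_const)]
  refine integrableOn_comp_abs_preimage (g := (· ^ s)) (S := Iic R) measurableSet_Iic ?_
  rw [Iic_inter_Ioi]
  exact (intervalIntegral.intervalIntegrable_rpow' hs).1

lemma integral_indicator_abs_le_rpow {s R : ℝ} (hs : -1 < s) (hR : 0 ≤ R) :
    ∫ x, {x : ℝ | |x| ≤ R}.indicator (fun x => |x| ^ s) x = 2 * (R ^ (s + 1) / (s + 1)) := by
  rw [integral_indicator (measurableSet_le measurable_abs measurable_const),
    show {x : ℝ | |x| ≤ R} = abs ⁻¹' Iic R from rfl,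
    setIntegral_comp_abs_preimage (g := (· ^ s)) measurableSet_Iic, Iic_inter_Ioi,
    ← intervalIntegral.integral_of_le hR, integral_rpow (Or.inl hs),
    zero_rpow (by linarith), sub_zero]

lemma integrable_indicator_lt_abs_rpow {s R : ℝ} (hs : s < -1) (hR : 0 < R) :
    Integrable ({x : ℝ | R < |x|}.indicator fun x => |x| ^ s) := by
  rw [integrable_indicator_iff (measurableSet_lt measurable_const measurable_abs)]
  refine integrableOn_comp_abs_preimage (g := (· ^ s)) (S := Ioi R) measurableSet_Ioi ?_
  rw [Ioi_inter_Ioi, sup_of_le_left hR.le]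
  exact integrableOn_Ioi_rpow_of_lt hs hR

lemma integral_indicator_lt_abs_rpow {s R : ℝ} (hs : s < -1) (hR : 0 < R) :
    ∫ x, {x : ℝ | R < |x|}.indicator (fun x => |x| ^ s) x = 2 * (R ^ (s + 1) / -(s + 1)) := by
  rw [integral_indicator (measurableSet_lt measurable_const measurable_abs),
    show {x : ℝ | R < |x|} = abs ⁻¹' Ioi R from rfl,
    setIntegral_comp_abs_preimage (g := (· ^ s)) measurableSet_Ioi, Ioi_inter_Ioi,
    sup_of_le_left hR.le, integral_Ioi_rpow_of_lt hs hR, neg_div, div_neg]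

lemma antiperiodic_cexp_I_mul {t : ℝ} (ht : t ≠ 0) :
    Function.Antiperiodic (fun τ : ℝ => Complex.exp (Complex.I * t * τ)) (π / t) := by
  intro τ
  have hshift : Complex.I * t * ((τ + π / t : ℝ) : ℂ) = Complex.I * t * τ + π * Complex.I := by
    have htC : (t : ℂ) ≠ 0 := by exact_mod_cast ht
    push_cast
    field_simp
  simp only [hshift, Complex.exp_add, Complex.exp_pi_mul_I, mul_neg_one]

lemma Function.Antiperiodic.two_mul_integral_mul {φ f : ℝ → ℂ} {c : ℝ}
    (hφ : Function.Antiperiodic φ c) (hf : Integrable fun τ => φ τ * f τ)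
    (hfc : Integrable fun τ => φ τ * f (τ + c)) :
    2 * ∫ τ, φ τ * f τ = ∫ τ, φ τ * (f τ - f (τ + c)) := by
  have hshift : ∫ τ, φ τ * f τ = -∫ τ, φ τ * f (τ + c) := by
    rw [← integral_add_right_eq_self (fun τ => φ τ * f τ) c, ← integral_neg]
    simp only [show ∀ x, φ (x + c) = -φ x from hφ, neg_mul]
  simp only [mul_sub]
  rw [integral_sub hf hfc, hshift]
  ring

lemma norm_sub_le_of_norm_deriv_le_rpow {E : Type*} [NormedAddCommGroup E] [NormedSpace ℝ E]
    {f : ℝ → E} {M a h τ : ℝ} (hf : DifferentiableOn ℝ f {x | x ≠ 0}) (hM : 0 ≤ M) (ha : a ≤ 0)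
    (hf' : ∀ x, x ≠ 0 → ‖deriv f x‖ ≤ M * |x| ^ a) (hτ : |h| < |τ|) :
    ‖f τ - f (τ + h)‖ ≤ M * (|τ| - |h|) ^ a * |h| := by
  have hball : ∀ x ∈ Metric.closedBall τ |h|, |τ| - |h| ≤ |x| := fun x hx => by
    have := abs_sub_abs_le_abs_sub τ x
    rw [Metric.mem_closedBall, Real.dist_eq, abs_sub_comm] at hx
    linarith
  have hdiff : ∀ x ∈ Metric.closedBall τ |h|, DifferentiableAt ℝ f x := fun x hx =>
    hf.differentiableAt (isOpen_compl_singleton.mem_nhds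
      (abs_pos.mp ((sub_pos.mpr hτ).trans_le (hball x hx))))
  have hbound : ∀ x ∈ Metric.closedBall τ |h|, ‖deriv f x‖ ≤ M * (|τ| - |h|) ^ a :=
    fun x hx => (hf' x (abs_pos.mp ((sub_pos.mpr hτ).trans_le (hball x hx)))).trans
      (mul_le_mul_of_nonneg_left (rpow_le_rpow_of_nonpos (sub_pos.mpr hτ) (hball x hx) ha) hM)
  have hmem : τ + h ∈ Metric.closedBall τ |h| := by simp
  simpa [norm_sub_rev] using (convex_closedBall τ |h|).norm_image_sub_le_of_norm_deriv_le hdiff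
    hbound (Metric.mem_closedBall_self (abs_nonneg h)) hmem

noncomputable def mikhlinConst (σ : ℝ) : ℝ :=
  2 * (3 ^ σ / σ) + 2 * (4 ^ σ / σ) + (2 / 3) ^ (σ - 2) * (2 * (3 ^ (σ - 1) / (1 - σ)))

noncomputable def shiftMajorant (σ h τ : ℝ) : ℝ :=
  {x | |x| ≤ 3 * |h|}.indicator (fun x => |x| ^ (σ - 1)) τ
    + {x | |x| ≤ 4 * |h|}.indicator (fun x => |x| ^ (σ - 1)) (τ + h)
    + (2 / 3) ^ (σ - 2) * |h| * {x | 3 * |h| < |x|}.indicator (fun x => |x| ^ (σ - 2)) τ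

section shiftMajorant

variable {σ h : ℝ}

lemma mikhlinConst_pos (hσ0 : 0 < σ) (hσ1 : σ < 1) : 0 < mikhlinConst σ := by
  have : 0 < 1 - σ := by linarith
  unfold mikhlinConst
  positivity

lemma integrable_shiftMajorant (hσ0 : 0 < σ) (hσ1 : σ < 1) (hh : h ≠ 0) :
    Integrable (shiftMajorant σ h) :=
  ((integrable_indicator_abs_le_rpow (by linarith) _).add
    ((integrable_indicator_abs_le_rpow (by linarith) _).comp_add_right h)).add
    ((integrable_indicator_lt_abs_rpow (by linarith) (by positivity)).const_mul _)

lemma integral_shiftMajorant (hσ0 : 0 < σ) (hσ1 : σ < 1) (hh : h ≠ 0) :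
    ∫ τ, shiftMajorant σ h τ = mikhlinConst σ * |h| ^ σ := by
  have hnear := integrable_indicator_abs_le_rpow (s := σ - 1) (by linarith)
  have hfar := integrable_indicator_lt_abs_rpow (s := σ - 2) (by linarith)
    (show 0 < 3 * |h| by positivity)
  have hpow (c : ℝ) (hc : 0 ≤ c) (r : ℝ) : (c * |h|) ^ r = c ^ r * |h| ^ r :=
    mul_rpow hc (abs_nonneg h)
  have hsucc : |h| * |h| ^ (σ - 1) = |h| ^ σ := by
    rw [← rpow_one_add' (abs_nonneg h) (by linarith), add_sub_cancel]
  have hshift :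
      Integrable fun τ => {x : ℝ | |x| ≤ 4 * |h|}.indicator (fun x => |x| ^ (σ - 1)) (τ + h) :=
    (hnear _).comp_add_right h
  have hsum : Integrable fun τ => {x : ℝ | |x| ≤ 3 * |h|}.indicator (fun x => |x| ^ (σ - 1)) τ
      + {x : ℝ | |x| ≤ 4 * |h|}.indicator (fun x => |x| ^ (σ - 1)) (τ + h) :=
    (hnear _).add hshift
  have hscaled : Integrable fun τ =>
      (2 / 3) ^ (σ - 2) * |h| * {x : ℝ | 3 * |h| < |x|}.indicator (fun x => |x| ^ (σ - 2)) τ :=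
    hfar.const_mul _
  unfold shiftMajorant
  rw [integral_add hsum hscaled, integral_add (hnear _) hshift, integral_const_mul,
    integral_add_right_eq_self ({x : ℝ | |x| ≤ 4 * |h|}.indicator fun x => |x| ^ (σ - 1)),
    integral_indicator_abs_le_rpow (by linarith) (by positivity),
    integral_indicator_abs_le_rpow (by linarith) (by positivity),
    integral_indicator_lt_abs_rpow (by linarith) (by positivity),
    show σ - 1 + 1 = σ by ring, show σ - 2 + 1 = σ - 1 by ring, hpow 3 (by norm_num),
    hpow 4 (by norm_num), hpow 3 (by norm_num), neg_sub, ← hsucc, mikhlinConst]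
  ring

lemma shiftMajorant_of_abs_le {τ : ℝ} (hτ : |τ| ≤ 3 * |h|) :
    shiftMajorant σ h τ = |τ| ^ (σ - 1) + |τ + h| ^ (σ - 1) := by
  have hτh : |τ + h| ≤ 4 * |h| := by linarith [abs_add_le τ h]
  simp [shiftMajorant, indicator, hτ, hτh, not_lt.mpr hτ]

lemma shiftMajorant_of_lt_abs {τ : ℝ} (hτ : 3 * |h| < |τ|) :
    (2 / 3) ^ (σ - 2) * |h| * |τ| ^ (σ - 2) ≤ shiftMajorant σ h τ := by
  have hB : 0 ≤ {x : ℝ | |x| ≤ 4 * |h|}.indicator (fun x => |x| ^ (σ - 1)) (τ + h) :=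
    indicator_nonneg (fun _ _ => by positivity) _
  simp only [shiftMajorant, indicator_of_notMem (show τ ∉ {x : ℝ | |x| ≤ 3 * |h|} from
    not_le.mpr hτ), indicator_of_mem (show τ ∈ {x : ℝ | 3 * |h| < |x|} from hτ), zero_add]
  linarith

lemma norm_sub_le_shiftMajorant {E : Type*} [NormedAddCommGroup E] [NormedSpace ℝ E]
    {f : ℝ → E} {M τ : ℝ} (hσ : σ ≤ 2) (hM : 0 ≤ M) (hf : DifferentiableOn ℝ f {x | x ≠ 0})
    (hf0 : ∀ x, x ≠ 0 → ‖f x‖ ≤ M * |x| ^ (σ - 1))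
    (hf1 : ∀ x, x ≠ 0 → ‖deriv f x‖ ≤ M * |x| ^ (σ - 2)) (hτ : τ ≠ 0) (hτh : τ + h ≠ 0) :
    ‖f τ - f (τ + h)‖ ≤ M * shiftMajorant σ h τ := by
  rcases le_or_gt |τ| (3 * |h|) with hnear | hfar
  · rw [shiftMajorant_of_abs_le hnear, mul_add]
    exact (norm_sub_le _ _).trans (add_le_add (hf0 τ hτ) (hf0 _ hτh))
  · have hgap : (2 / 3) * |τ| ≤ |τ| - |h| := by linarith
    calc ‖f τ - f (τ + h)‖ ≤ M * (|τ| - |h|) ^ (σ - 2) * |h| :=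
          norm_sub_le_of_norm_deriv_le_rpow hf hM (by linarith : σ - 2 ≤ 0) hf1
            (show |h| < |τ| by linarith [abs_nonneg h])
      _ ≤ M * ((2 / 3) * |τ|) ^ (σ - 2) * |h| := by
          have hpow := rpow_le_rpow_of_nonpos (by positivity) hgap (by linarith : σ - 2 ≤ 0)
          exact mul_le_mul_of_nonneg_right (mul_le_mul_of_nonneg_left hpow hM) (abs_nonneg h)
      _ ≤ M * shiftMajorant σ h τ := by
          rw [mul_rpow (by norm_num) (abs_nonneg τ), mul_assoc]
          gcongr
          linarith [shiftMajorant_of_lt_abs (σ := σ) hfar]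

end shiftMajorant

lemma norm_integral_cexp_mul_le {f : ℝ → ℂ} {σ M t : ℝ} (hσ0 : 0 < σ) (hσ1 : σ < 1) (hM : 0 ≤ M)
    (hf : DifferentiableOn ℝ f {x | x ≠ 0}) (hfi : Integrable f)
    (hf0 : ∀ x, x ≠ 0 → ‖f x‖ ≤ M * |x| ^ (σ - 1))
    (hf1 : ∀ x, x ≠ 0 → ‖deriv f x‖ ≤ M * |x| ^ (σ - 2)) (ht : t ≠ 0) :
    ‖∫ τ : ℝ, Complex.exp (Complex.I * t * τ) * f τ‖ ≤ mikhlinConst σ / 2 * M * |π / t| ^ σ := by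
  set h := π / t
  have hh : h ≠ 0 := div_ne_zero pi_ne_zero ht
  have hunit (τ : ℝ) : ‖Complex.exp (Complex.I * t * τ)‖ = 1 := by
    rw [Complex.norm_exp]
    simp
  have hint (g : ℝ → ℂ) (hg : Integrable g) :
      Integrable fun τ : ℝ => Complex.exp (Complex.I * t * τ) * g τ :=
    hg.bdd_mul (c := 1) (by fun_prop) (ae_of_all _ fun τ => (hunit τ).le)
  have htwo := (antiperiodic_cexp_I_mul ht).two_mul_integral_mul (hint f hfi)
    (hint _ (hfi.comp_add_right h))
  have hbound : ‖∫ τ : ℝ, Complex.exp (Complex.I * t * τ) * (f τ - f (τ + h))‖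
      ≤ ∫ τ, M * shiftMajorant σ h τ := by
    refine norm_integral_le_of_norm_le ((integrable_shiftMajorant hσ0 hσ1 hh).const_mul M) ?_
    filter_upwards [(Set.toFinite {0, -h}).countable.ae_notMem volume] with τ hτ
    simp only [Set.mem_insert_iff, Set.mem_singleton_iff, not_or] at hτ
    rw [norm_mul, hunit, one_mul]
    exact norm_sub_le_shiftMajorant (by linarith) hM hf hf0 hf1 hτ.1
      (fun h0 => hτ.2 (eq_neg_of_add_eq_zero_left h0))
  rw [← htwo, integral_const_mul, integral_shiftMajorant hσ0 hσ1 hh, norm_mul] at hbound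
  norm_num at hbound
  linarith

/-- One-dimensional Mikhlin-type pointwise estimate (Shibata–Shimizu, `n = 1`, `L = 0`):
if `f` is `C²` on `ℝ \ {0}`, integrable, and `|f^{(k)}(τ)| ≤ M |τ|^{σ-1-k}` for
`k = 0, 1`, with `σ ∈ (0,1)`, then the inverse Fourier transform
`g(t) = (1/2π) ∫ e^{itτ} f(τ) dτ` satisfies `|g(t)| ≤ C M |t|^{-σ}` for `t ≠ 0`,
with `C` depending only on `σ`. -/
theorem stmt_14 (σ : ℝ) (hσ : σ ∈ Set.Ioo (0 : ℝ) 1) :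
    ∃ C : ℝ, 0 < C ∧
      ∀ (f : ℝ → ℂ) (M : ℝ), 0 ≤ M →
        ContDiffOn ℝ 2 f {τ : ℝ | τ ≠ 0} →
        Integrable f →
        (∀ τ : ℝ, τ ≠ 0 → ‖f τ‖ ≤ M * |τ| ^ (σ - 1)) →
        (∀ τ : ℝ, τ ≠ 0 → ‖deriv f τ‖ ≤ M * |τ| ^ (σ - 2)) →
        ∀ t : ℝ, t ≠ 0 →
          ‖((1 / (2 * Real.pi) : ℝ) : ℂ) *
              ∫ τ : ℝ, Complex.exp (Complex.I * (t : ℂ) * (τ : ℂ)) * f τ‖ ≤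
            C * M * |t| ^ (-σ) := by
  obtain ⟨hσ0, hσ1⟩ := hσ
  refine ⟨π ^ σ / (4 * π) * mikhlinConst σ, by have := mikhlinConst_pos hσ0 hσ1; positivity, ?_⟩
  intro f M hM hf hfi hf0 hf1 t ht
  have hestimate := norm_integral_cexp_mul_le hσ0 hσ1 hM (hf.differentiableOn (by norm_num)) hfi
    hf0 hf1 ht
  have hscale : |π / t| ^ σ = π ^ σ * |t| ^ (-σ) := by
    rw [abs_div, abs_of_pos pi_pos, div_rpow pi_pos.le (abs_nonneg t), rpow_neg (abs_nonneg t),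
      div_eq_mul_inv]
  rw [norm_mul, Complex.norm_real, Real.norm_of_nonneg (by positivity)]
  calc 1 / (2 * π) * ‖∫ τ : ℝ, Complex.exp (Complex.I * t * τ) * f τ‖
      ≤ 1 / (2 * π) * (mikhlinConst σ / 2 * M * |π / t| ^ σ) :=
        mul_le_mul_of_nonneg_left hestimate (by positivity)
    _ = π ^ σ / (4 * π) * mikhlinConst σ * M * |t| ^ (-σ) := by
      rw [hscale]
      field_simp
      ring
end
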